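/- arXiv:1504.03930 — 9 statements merged into one kernel-verified Lean document; each statement's English description precedes it below -/
import Mathlib

section
/- Let k ≥ 2 and p ≥ 1 be integers and let q(x) = x·(k−x)^(p−1). Then q(0) = 0, q(j) ≥ 0 for all integers 1 ≤ j ≤ k, and −q'(j) + r·q(j) ≥ 0 for all integers 1 ≤ j ≤ k, where r = max((k−p)/(k−1), 0). -/
/-!
Write `q = X (k - X)^(p-1)`. For `p ≥ 2` the derivative factors as
`q' = (k - X)^(p-2) ((k - X) - (p-1) X)`, so on `[1, k]` the sign of `-q' + r q` is that of
`B(x) = -(k - x) + (p - 1) x + r x (k - x)`. Replacing `r` by `(k - p)/(k - 1)` only decreases `B`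
there, and then `(k - 1) B(x) = (x - 1)(k (k - 1) - (k - p) x) ≥ 0`. For `p = 1` the bound `r ≥ 1`
is all that is needed.
-/

open Polynomial

theorem Polynomial.derivative_X_mul_C_sub_X_pow_succ {R : Type*} [CommRing R] (k : R) (m : ℕ) :
    derivative (X * (C k - X) ^ (m + 1)) = (C k - X) ^ m * (C k - X - C ((m : R) + 1) * X) := by
  simp only [derivative_mul, derivative_X, one_mul, derivative_pow, derivative_sub,
    derivative_C, zero_sub, Nat.add_sub_cancel]
  push_cast
  ring

lemma neg_sub_add_mul_add_mul_nonneg {k p r x : ℝ} (hk : 1 < k) (hp : 1 ≤ p)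
    (hr : (k - p) / (k - 1) ≤ r) (hx : 1 ≤ x) (hxk : x ≤ k) :
    0 ≤ -(k - x) + (p - 1) * x + r * (x * (k - x)) := by
  have hk1 : 0 < k - 1 := by linarith
  have hr_mul : (k - p) / (k - 1) * (x * (k - x)) ≤ r * (x * (k - x)) :=
    mul_le_mul_of_nonneg_right hr (mul_nonneg (by linarith) (by linarith))
  have hfactor : (k - 1) * (-(k - x) + (p - 1) * x + (k - p) / (k - 1) * (x * (k - x)))
      = (x - 1) * (k * (k - 1) - (k - p) * x) := by
    field_simp
    ring
  have hprod : 0 ≤ (x - 1) * (k * (k - 1) - (k - p) * x) :=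
    mul_nonneg (by linarith) (by nlinarith)
  have hlower : 0 ≤ -(k - x) + (p - 1) * x + (k - p) / (k - 1) * (x * (k - x)) :=
    nonneg_of_mul_nonneg_right (hfactor ▸ hprod) hk1
  linarith

lemma neg_derivative_eval_add_mul_eval_nonneg {k r x : ℝ} {p : ℕ} (hk : 1 < k) (hp : 1 ≤ p)
    (hr : (k - p) / (k - 1) ≤ r) (hx : 1 ≤ x) (hxk : x ≤ k) :
    0 ≤ -(X * (C k - X) ^ (p - 1)).derivative.eval x + r * (X * (C k - X) ^ (p - 1)).eval x := by
  rcases p with _ | _ | m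
  · omega
  · have hr1 : 1 ≤ r := by
      rwa [Nat.cast_one, div_self (by linarith)] at hr
    simp only [Nat.sub_self, pow_zero, mul_one, derivative_X, eval_one, eval_X]
    nlinarith
  · have hB := neg_sub_add_mul_add_mul_nonneg hk (by exact_mod_cast hp) hr hx hxk
    rw [show m + 2 - 1 = m + 1 from rfl, derivative_X_mul_C_sub_X_pow_succ]
    simp only [eval_mul, eval_pow, eval_sub, eval_C, eval_X]
    have hfactor : -((k - x) ^ m * (k - x - ((m : ℝ) + 1) * x)) + r * (x * (k - x) ^ (m + 1))
        = (k - x) ^ m * (-(k - x) + (((m + 2 : ℕ) : ℝ) - 1) * x + r * (x * (k - x))) := by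
      push_cast
      ring
    rw [hfactor]
    exact mul_nonneg (pow_nonneg (by linarith) m) hB

theorem stmt1 (k p : ℕ) (hk : 2 ≤ k) (hp : 1 ≤ p)
    (q : Polynomial ℝ) (hq : q = X * (C (k : ℝ) - X) ^ (p - 1))
    (r : ℝ) (hr : r = max (((k : ℝ) - p) / ((k : ℝ) - 1)) 0) :
    q.eval 0 = 0 ∧
    (∀ j : ℕ, 1 ≤ j → j ≤ k → 0 ≤ q.eval (j : ℝ)) ∧
    (∀ j : ℕ, 1 ≤ j → j ≤ k → 0 ≤ -q.derivative.eval (j : ℝ) + r * q.eval (j : ℝ)) := by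
  subst hq
  have hk1 : (1 : ℝ) < k := by exact_mod_cast hk
  have hr' : ((k : ℝ) - p) / ((k : ℝ) - 1) ≤ r := hr ▸ le_max_left _ _
  refine ⟨by simp, fun j hj hjk => ?_, fun j hj hjk => ?_⟩
  · have hjk' : (j : ℝ) ≤ k := by exact_mod_cast hjk
    simp only [eval_mul, eval_pow, eval_sub, eval_C, eval_X]
    exact mul_nonneg j.cast_nonneg (pow_nonneg (by linarith) _)
  · exact neg_derivative_eval_add_mul_eval_nonneg hk1 hp hr' (by exact_mod_cast hj)
      (by exact_mod_cast hjk)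
end

section
/- Let k ≥ 2 and p ≥ 2 be integers and let q(x) = x²·(k−x)^(p−2). Then q(0) = 0, q'(0) = 0, q(j) ≥ 0 for all integers 1 ≤ j ≤ k, and −q'(j) + r·q(j) ≥ 0 for all integers 1 ≤ j ≤ k, where r = max((2k−p)/(k−1), 0). -/
/-!
Write `p = m + 2`. For `m ≥ 1` one has
`-q'(x) + r q(x) = x (k - x)^(m-1) g(x)` with `g(x) = m x - 2 (k - x) + r x (k - x)`.
Since `r ≥ 0`, `g` is concave, so on `[1, k]` it lies above its chord; at the endpoints
`g(k) = m k ≥ 0` and `g(1) = m - (2k - 2) + r (k - 1) ≥ 0` exactly because `r (k - 1) ≥ 2k - p`.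
For `m = 0` the condition on `r` forces `r ≥ 2`, and `-q'(j) + r q(j) = j (r j - 2) ≥ 0`.
-/

open Polynomial

lemma eval_X_sq_mul_C_sub_X_pow (k x : ℝ) (m : ℕ) :
    (X ^ 2 * (C k - X) ^ m : ℝ[X]).eval x = x ^ 2 * (k - x) ^ m := by
  simp

lemma neg_derivative_add_mul_eval_X_sq (r x : ℝ) :
    -(derivative (X ^ 2 : ℝ[X])).eval x + r * (X ^ 2 : ℝ[X]).eval x = x * (r * x - 2) := by
  simp only [derivative_X_pow, eval_mul, eval_pow, eval_C, eval_X]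
  norm_num
  ring

lemma neg_derivative_add_mul_eval_X_sq_mul_C_sub_X_pow_succ (k r x : ℝ) (n : ℕ) :
    -(derivative (X ^ 2 * (C k - X) ^ (n + 1) : ℝ[X])).eval x
        + r * (X ^ 2 * (C k - X) ^ (n + 1) : ℝ[X]).eval x
      = x * (k - x) ^ n * ((n + 1) * x - 2 * (k - x) + r * x * (k - x)) := by
  simp only [derivative_mul, derivative_pow, derivative_sub, derivative_X, derivative_C,
    eval_add, eval_sub, eval_mul, eval_pow, eval_one, eval_zero, eval_C, eval_X,
    Nat.cast_ofNat, Nat.add_one_sub_one, Nat.cast_add, Nat.cast_one]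
  ring

lemma certificate_factor_nonneg {m k r j : ℝ} (hm : 0 ≤ m) (hr : 0 ≤ r)
    (hrk : 2 * k - (m + 2) ≤ r * (k - 1)) (hk : 1 < k) (hj1 : 1 ≤ j) (hjk : j ≤ k) :
    0 ≤ m * j - 2 * (k - j) + r * j * (k - j) := by
  have chord : (k - 1) * (m * j - 2 * (k - j) + r * j * (k - j))
      = (k - j) * (m - 2 * (k - 1) + r * (k - 1)) + (j - 1) * (m * k)
        + r * (k - 1) * ((j - 1) * (k - j)) := by ring
  have hsum : 0 ≤ (k - 1) * (m * j - 2 * (k - j) + r * j * (k - j)) := by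
    rw [chord]
    have h1 : 0 ≤ (k - j) * (m - 2 * (k - 1) + r * (k - 1)) :=
      mul_nonneg (by linarith) (by linarith)
    have h2 : 0 ≤ (j - 1) * (m * k) := mul_nonneg (by linarith) (mul_nonneg hm (by linarith))
    have h3 : 0 ≤ r * (k - 1) * ((j - 1) * (k - j)) :=
      mul_nonneg (mul_nonneg hr (by linarith)) (mul_nonneg (by linarith) (by linarith))
    linarith
  exact nonneg_of_mul_nonneg_right hsum (by linarith)

lemma le_mul_sub_one_of_eq_max_div {a k r : ℝ} (hk : 1 < k) (hr : r = max (a / (k - 1)) 0) :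
    a ≤ r * (k - 1) := by
  rw [← div_le_iff₀ (by linarith), hr]
  exact le_max_left _ _

theorem stmt2 (k p : ℕ) (hk : 2 ≤ k) (hp : 2 ≤ p)
    (q : Polynomial ℝ) (hq : q = X ^ 2 * (C (k : ℝ) - X) ^ (p - 2))
    (r : ℝ) (hr : r = max ((2 * (k : ℝ) - p) / ((k : ℝ) - 1)) 0) :
    q.eval 0 = 0 ∧ q.derivative.eval 0 = 0 ∧
    (∀ j : ℕ, 1 ≤ j → j ≤ k → 0 ≤ q.eval (j : ℝ)) ∧
    (∀ j : ℕ, 1 ≤ j → j ≤ k → 0 ≤ -q.derivative.eval (j : ℝ) + r * q.eval (j : ℝ)) := by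
  obtain ⟨m, rfl⟩ : ∃ m, p = m + 2 := ⟨p - 2, by omega⟩
  rw [Nat.add_sub_cancel] at hq
  subst hq
  have hk1 : (1 : ℝ) < k := by exact_mod_cast hk
  have hr0 : 0 ≤ r := hr ▸ le_max_right _ _
  have hrk : 2 * (k : ℝ) - (m + 2) ≤ r * (k - 1) := by
    exact_mod_cast le_mul_sub_one_of_eq_max_div hk1 hr
  refine ⟨by simp, by simp, fun j hj1 hjk => ?_, fun j hj1 hjk => ?_⟩
  all_goals
    have hj1' : (1 : ℝ) ≤ j := by exact_mod_cast hj1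
    have hjk' : (j : ℝ) ≤ k := by exact_mod_cast hjk
  · rw [eval_X_sq_mul_C_sub_X_pow]
    exact mul_nonneg (sq_nonneg _) (pow_nonneg (by linarith) _)
  · cases m with
    | zero =>
      have hr2 : 2 ≤ r := by
        push_cast at hrk
        nlinarith
      rw [pow_zero, mul_one, neg_derivative_add_mul_eval_X_sq]
      exact mul_nonneg (by linarith) (by nlinarith)
    | succ n =>
      rw [neg_derivative_add_mul_eval_X_sq_mul_C_sub_X_pow_succ]
      have hg := certificate_factor_nonneg (m := n + 1) (by positivity) hr0
        (by exact_mod_cast hrk) hk1 hj1' hjk'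
      exact mul_nonneg (mul_nonneg (by linarith) (pow_nonneg (by linarith) _)) (by exact_mod_cast hg)
end

section
/- Let q be a real polynomial and r a real number. Suppose q(j) ≥ 0 and −q'(j) + r·q(j) ≥ 0 for all integers 1 ≤ j ≤ k, and q(0) = 0 and q'(0) = 0. Then the polynomial Q = q² satisfies Q(j) ≥ 0 and −Q'(j) + 2r·Q(j) ≥ 0 for all integers 1 ≤ j ≤ k, as well as Q(0) = 0 and Q'(0) = 0. -/
open Polynomial

theorem stmt3 (k : ℕ) (hk : 1 ≤ k) (q : Polynomial ℝ) (r : ℝ) (hr : 0 ≤ r)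
    (h1 : ∀ j : ℕ, 1 ≤ j → j ≤ k → 0 ≤ q.eval (j : ℝ))
    (h2 : ∀ j : ℕ, 1 ≤ j → j ≤ k → 0 ≤ -q.derivative.eval (j : ℝ) + r * q.eval (j : ℝ))
    (h3 : q.eval 0 = 0) (h4 : q.derivative.eval 0 = 0)
    (Q : Polynomial ℝ) (hQ : Q = q ^ 2) :
    (∀ j : ℕ, 1 ≤ j → j ≤ k → 0 ≤ Q.eval (j : ℝ)) ∧
    (∀ j : ℕ, 1 ≤ j → j ≤ k → 0 ≤ -Q.derivative.eval (j : ℝ) + 2 * r * Q.eval (j : ℝ)) ∧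
    Q.eval 0 = 0 ∧ Q.derivative.eval 0 = 0 := by
  subst hQ
  have hd : ∀ x : ℝ, (derivative (q ^ 2)).eval x = 2 * q.eval x * q.derivative.eval x := by
    intro x
    simp [derivative_pow]
    try ring
  refine ⟨fun j _ _ => by simpa using sq_nonneg (q.eval (j:ℝ)), fun j hj1 hj2 => ?_, by simp [h3],
    by simp [hd, h3]⟩
  have h1' := h1 j hj1 hj2
  have h2' := h2 j hj1 hj2
  have := mul_nonneg (mul_nonneg (by norm_num : (0:ℝ) ≤ 2) h1') h2'
  rw [hd]
  simp only [eval_pow]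
  nlinarith
end

section
/- Let q be a real polynomial, r ≥ 0 a real number, and k ≥ 2 an integer. Suppose q satisfies q(j) ≥ 0 and −q'(j) + r·q(j) ≥ 0 for all integers 1 ≤ j ≤ k, and q(0) = 0. Then the polynomial Q(x) = (k−x)·q(x) satisfies Q(j) ≥ 0 and −Q'(j) + max(0, r − 1/(k−1))·Q(j) ≥ 0 for all integers 1 ≤ j ≤ k, and Q(0) = 0. -/
open Polynomial

theorem stmt4 (k : ℕ) (hk : 2 ≤ k) (q : Polynomial ℝ) (r : ℝ) (hr : 0 ≤ r)
    (h1 : ∀ j : ℕ, 1 ≤ j → j ≤ k → 0 ≤ q.eval (j : ℝ))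
    (h2 : ∀ j : ℕ, 1 ≤ j → j ≤ k → 0 ≤ -q.derivative.eval (j : ℝ) + r * q.eval (j : ℝ))
    (h3 : q.eval 0 = 0)
    (Q : Polynomial ℝ) (hQ : Q = (C (k : ℝ) - X) * q) :
    (∀ j : ℕ, 1 ≤ j → j ≤ k → 0 ≤ Q.eval (j : ℝ)) ∧
    (∀ j : ℕ, 1 ≤ j → j ≤ k →
      0 ≤ -Q.derivative.eval (j : ℝ) + max 0 (r - 1 / ((k : ℝ) - 1)) * Q.eval (j : ℝ)) ∧
    Q.eval 0 = 0 := by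
  subst hQ
  have hk2 : (2:ℝ) ≤ (k:ℝ) := by exact_mod_cast hk
  refine ⟨?_, ?_, by simp [h3]⟩
  · intro j h1j hjk
    have hjk' : (j:ℝ) ≤ k := by exact_mod_cast hjk
    have hq := h1 j h1j hjk
    simp only [eval_mul, eval_sub, eval_C, eval_X]
    nlinarith
  · intro j h1j hjk
    have hjk' : (j:ℝ) ≤ k := by exact_mod_cast hjk
    have h1j' : (1:ℝ) ≤ (j:ℝ) := by exact_mod_cast h1j
    have hq := h1 j h1j hjk
    have hd := h2 j h1j hjk
    simp only [derivative_mul, derivative_sub, derivative_C, derivative_X, eval_add,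
      eval_mul, eval_sub, eval_C, eval_X, zero_sub, eval_neg, eval_one, neg_mul, one_mul]
    set s := max 0 (r - 1/((k:ℝ)-1)) with hs
    have hs1 : r - 1/((k:ℝ)-1) ≤ s := le_max_right _ _
    have hs0 : 0 ≤ s := le_max_left _ _
    have hkj : (0:ℝ) ≤ (k:ℝ) - j := by linarith
    have hkj1 : (k:ℝ) - j ≤ (k:ℝ) - 1 := by linarith
    have hpos : (0:ℝ) < (k:ℝ) - 1 := by linarith
    have key : (0:ℝ) ≤ 1 + ((k:ℝ) - j) * (s - r) := by
      have h2' : ((k:ℝ) - j) * (-(1/((k:ℝ)-1))) ≤ ((k:ℝ) - j) * (s - r) :=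
        mul_le_mul_of_nonneg_left (by linarith) hkj
      have h3' : ((k:ℝ) - j) * (1/((k:ℝ)-1)) ≤ 1 := by
        rw [mul_one_div, div_le_one hpos]; linarith
      nlinarith
    nlinarith [mul_nonneg hkj hd, mul_nonneg key hq]
end

section
/- Let q be a real polynomial of degree p that is nonnegative on [0,k] with q(0) = 0, and set a = max_{x∈[0,k]} q(x) and b = max_{x∈[0,k]} |q''(x)|. If q'(j) ≤ 0 for all integers 1 ≤ j ≤ k, then for each integer 1 ≤ j ≤ k−1, the integral of q' over [j, j+1] is at most b/4, and the integral of q' over [0,1] is at most b/2. -/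
open Polynomial intervalIntegral

private lemma stmt10_lip (q : Polynomial ℝ) (b x y k : ℝ)
    (hB : ∀ t ∈ Set.Icc (0:ℝ) k, |q.derivative.derivative.eval t| ≤ b)
    (hx : x ∈ Set.Icc (0:ℝ) k) (hy : y ∈ Set.Icc (0:ℝ) k) :
    q.derivative.eval x ≤ q.derivative.eval y + b * |x - y| := by
  have hsub : Set.uIcc y x ⊆ Set.Icc (0:ℝ) k := Set.uIcc_subset_Icc hy hx
  have hftc : (∫ t in y..x, q.derivative.derivative.eval t)
      = q.derivative.eval x - q.derivative.eval y := by
    apply intervalIntegral.integral_eq_sub_of_hasDerivAt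
    · intro t _
      exact Polynomial.hasDerivAt q.derivative t
    · exact (q.derivative.derivative.continuous_aeval).intervalIntegrable _ _
  have hbnd : ‖∫ t in y..x, q.derivative.derivative.eval t‖ ≤ b * |x - y| := by
    apply intervalIntegral.norm_integral_le_of_norm_le_const
    intro t ht
    exact hB t (hsub (Set.uIoc_subset_uIcc ht))
  rw [hftc, Real.norm_eq_abs] at hbnd
  linarith [(abs_le.mp hbnd).2]

private lemma stmt10_shape1 (q : Polynomial ℝ) (b c d : ℝ) (hcd : c ≤ d)
    (hle : ∀ x ∈ Set.Icc c d, q.derivative.eval x ≤ b * (x - c)) :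
    (∫ x in c..d, q.derivative.eval x) ≤ b * (d - c)^2 / 2 := by
  have h1 : (∫ x in c..d, q.derivative.eval x) ≤ ∫ x in c..d, b * (x - c) := by
    apply intervalIntegral.integral_mono_on hcd
    · exact (q.derivative.continuous_aeval).intervalIntegrable _ _
    · exact ((continuous_const.mul (continuous_id.sub continuous_const))).intervalIntegrable _ _
    · exact hle
  have h2 : (∫ x in c..d, b * (x - c)) = b * (d - c)^2 / 2 := by
    rw [intervalIntegral.integral_const_mul,
      intervalIntegral.integral_sub intervalIntegrable_id intervalIntegrable_const,
      integral_id, intervalIntegral.integral_const]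
    simp only [smul_eq_mul]; ring
  linarith

private lemma stmt10_shape2 (q : Polynomial ℝ) (b c d : ℝ) (hcd : c ≤ d)
    (hle : ∀ x ∈ Set.Icc c d, q.derivative.eval x ≤ b * (d - x)) :
    (∫ x in c..d, q.derivative.eval x) ≤ b * (d - c)^2 / 2 := by
  have h1 : (∫ x in c..d, q.derivative.eval x) ≤ ∫ x in c..d, b * (d - x) := by
    apply intervalIntegral.integral_mono_on hcd
    · exact (q.derivative.continuous_aeval).intervalIntegrable _ _
    · exact ((continuous_const.mul (continuous_const.sub continuous_id))).intervalIntegrable _ _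
    · exact hle
  have h2 : (∫ x in c..d, b * (d - x)) = b * (d - c)^2 / 2 := by
    rw [intervalIntegral.integral_const_mul,
      intervalIntegral.integral_sub intervalIntegrable_const intervalIntegrable_id,
      integral_id, intervalIntegral.integral_const]
    simp only [smul_eq_mul]; ring
  linarith

theorem stmt10 (k p : ℕ) (hk : 2 ≤ k) (hp : 1 ≤ p)
    (q : Polynomial ℝ) (hdeg : q.natDegree = p)
    (hpos : ∀ x ∈ Set.Icc (0 : ℝ) (k : ℝ), 0 ≤ q.eval x)
    (h0 : q.eval 0 = 0)
    (a b : ℝ)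
    (ha : a = sSup ((fun x => q.eval x) '' Set.Icc (0 : ℝ) (k : ℝ)))
    (hb : b = sSup ((fun x => |q.derivative.derivative.eval x|) '' Set.Icc (0 : ℝ) (k : ℝ)))
    (hder : ∀ j : ℕ, 1 ≤ j → j ≤ k → q.derivative.eval (j : ℝ) ≤ 0) :
    (∀ j : ℕ, 1 ≤ j → j ≤ k - 1 →
      (∫ x in (j : ℝ)..((j : ℝ) + 1), q.derivative.eval x) ≤ b / 4) ∧
    (∫ x in (0 : ℝ)..(1 : ℝ), q.derivative.eval x) ≤ b / 2 := by
  have hk0 : (0:ℝ) ≤ (k:ℝ) := by positivity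
  have hk2 : (2:ℝ) ≤ (k:ℝ) := by exact_mod_cast hk
  have hbdd : BddAbove ((fun x => |q.derivative.derivative.eval x|) '' Set.Icc (0 : ℝ) (k : ℝ)) :=
    (isCompact_Icc.image_of_continuousOn
      ((q.derivative.derivative.continuous_aeval).abs.continuousOn)).bddAbove
  have hB : ∀ t ∈ Set.Icc (0:ℝ) (k:ℝ), |q.derivative.derivative.eval t| ≤ b := by
    intro t ht
    rw [hb]
    exact le_csSup hbdd ⟨t, ht, rfl⟩
  have hb0 : 0 ≤ b := le_trans (abs_nonneg _) (hB 0 ⟨le_refl _, hk0⟩)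
  constructor
  · intro j hj1 hjk
    have hjk' : j + 1 ≤ k := by omega
    have hjR : (j:ℝ) + 1 ≤ (k:ℝ) := by exact_mod_cast hjk'
    have hj0 : (0:ℝ) ≤ (j:ℝ) := by positivity
    have hgc : q.derivative.eval (j:ℝ) ≤ 0 := hder j hj1 (by omega)
    have hgd : q.derivative.eval ((j:ℝ) + 1) ≤ 0 := by
      have := hder (j+1) (by omega) hjk'
      push_cast at this
      exact this
    have hmemj : (j:ℝ) ∈ Set.Icc (0:ℝ) (k:ℝ) := ⟨hj0, by linarith⟩
    have hmemj1 : (j:ℝ) + 1 ∈ Set.Icc (0:ℝ) (k:ℝ) := ⟨by linarith, hjR⟩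
    -- first half
    have hhalf1 : (∫ x in (j:ℝ)..((j:ℝ) + 1/2), q.derivative.eval x) ≤ b * ((1:ℝ)/2)^2 / 2 := by
      have := stmt10_shape1 q b (j:ℝ) ((j:ℝ) + 1/2) (by linarith) ?_
      · convert this using 2; ring
      intro x hx
      have hxmem : x ∈ Set.Icc (0:ℝ) (k:ℝ) := ⟨by linarith [hx.1], by linarith [hx.2]⟩
      have := stmt10_lip q b x (j:ℝ) (k:ℝ) hB hxmem hmemj
      rw [abs_of_nonneg (by linarith [hx.1] : (0:ℝ) ≤ x - (j:ℝ))] at this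
      linarith
    -- second half
    have hhalf2 : (∫ x in ((j:ℝ) + 1/2)..((j:ℝ) + 1), q.derivative.eval x) ≤ b * ((1:ℝ)/2)^2 / 2 := by
      have := stmt10_shape2 q b ((j:ℝ) + 1/2) ((j:ℝ) + 1) (by linarith) ?_
      · convert this using 2; ring
      intro x hx
      have hxmem : x ∈ Set.Icc (0:ℝ) (k:ℝ) := ⟨by linarith [hx.1], by linarith [hx.2]⟩
      have := stmt10_lip q b x ((j:ℝ) + 1) (k:ℝ) hB hxmem hmemj1
      rw [abs_of_nonpos (by linarith [hx.2] : x - ((j:ℝ)+1) ≤ 0)] at this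
      have habs : -(x - ((j:ℝ)+1)) = ((j:ℝ)+1) - x := by ring
      rw [habs] at this
      linarith
    have hsplit : (∫ x in (j:ℝ)..((j:ℝ) + 1/2), q.derivative.eval x)
        + (∫ x in ((j:ℝ) + 1/2)..((j:ℝ) + 1), q.derivative.eval x)
        = ∫ x in (j:ℝ)..((j:ℝ) + 1), q.derivative.eval x :=
      intervalIntegral.integral_add_adjacent_intervals
        ((q.derivative.continuous_aeval).intervalIntegrable _ _)
        ((q.derivative.continuous_aeval).intervalIntegrable _ _)
    rw [← hsplit]
    nlinarith
  · have hg1 : q.derivative.eval (1:ℝ) ≤ 0 := by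
      have := hder 1 le_rfl (by omega)
      push_cast at this
      exact this
    have hmem1 : (1:ℝ) ∈ Set.Icc (0:ℝ) (k:ℝ) := ⟨by norm_num, by linarith⟩
    have := stmt10_shape2 q b 0 1 (by norm_num) ?_
    · convert this using 1; norm_num
    intro x hx
    have hxmem : x ∈ Set.Icc (0:ℝ) (k:ℝ) := ⟨hx.1, by linarith [hx.2]⟩
    have hl := stmt10_lip q b x (1:ℝ) (k:ℝ) hB hxmem hmem1
    rw [abs_of_nonpos (by linarith [hx.2] : x - 1 ≤ 0)] at hl
    have habs : -(x - 1) = 1 - x := by ring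
    rw [habs] at hl
    linarith
end

section
/- Let q be a real polynomial of degree p ≥ 1. Then the number of integers j with 0 ≤ j ≤ k−1 such that q' takes a positive value somewhere on [j, j+1] is at most ⌊p/2⌋, provided q'(j) ≤ 0 for all integers 1 ≤ j ≤ k and q'(0) is allowed to be positive. -/
open Polynomial

theorem stmt12 (k p : ℕ) (hk : 1 ≤ k) (hp : 1 ≤ p)
    (q : Polynomial ℝ) (hdeg : q.natDegree = p)
    (hder : ∀ j : ℕ, 1 ≤ j → j ≤ k → q.derivative.eval (j : ℝ) ≤ 0) :
    {j : ℕ | j < k ∧ ∃ x ∈ Set.Icc (j : ℝ) ((j : ℝ) + 1), 0 < q.derivative.eval x}.ncard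
      ≤ p / 2 := by
  classical
  set f : ℝ → ℝ := fun x => q.derivative.eval x with hf
  have hcont : Continuous f := q.derivative.continuous
  set S : Set ℕ := {j : ℕ | j < k ∧ ∃ x ∈ Set.Icc (j : ℝ) ((j : ℝ) + 1), 0 < f x} with hS
  have hSfin : S.Finite := Set.Finite.subset (Set.finite_Iio k) (fun j hj => hj.1)
  have hncard : S.ncard = hSfin.toFinset.card := Set.ncard_eq_toFinset_card S hSfin
  set F : Finset ℕ := hSfin.toFinset with hF
  have hmem : ∀ j, j ∈ F ↔ j ∈ S := fun j => hSfin.mem_toFinset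
  rcases F.eq_empty_or_nonempty with hFe | hFne
  · rw [hncard, hFe]; simp
  · -- choose witnesses
    have hxex : ∀ j : ℕ, j ∈ S → ∃ y, y ∈ Set.Icc (j:ℝ) ((j:ℝ)+1) ∧ 0 < f y := by
      intro j hj; obtain ⟨y, hy1, hy2⟩ := hj.2; exact ⟨y, hy1, hy2⟩
    choose! x hx1 hx2 using hxex
    set I : ℝ := F.inf' hFne (fun j => f (x j)) with hI
    have hIpos : 0 < I := by
      rw [hI, Finset.lt_inf'_iff]
      exact fun j hj => hx2 j ((hmem j).1 hj)
    set c : ℝ := I / 2 with hc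
    have hcpos : 0 < c := half_pos hIpos
    have hclt : ∀ j ∈ F, c < f (x j) := by
      intro j hj
      have h1 : I ≤ f (x j) := Finset.inf'_le _ hj
      have h2 : c < I := half_lt_self hIpos
      linarith
    set P : Polynomial ℝ := q.derivative - C c with hP
    have hPne : P ≠ 0 := by
      intro h
      obtain ⟨j0, hj0⟩ := hFne
      have h1 := hclt j0 hj0
      have h2 : P.eval (x j0) = 0 := by rw [h]; simp
      rw [hP] at h2
      simp only [eval_sub, eval_C] at h2
      have : f (x j0) = c := by rw [hf]; linarith [sub_eq_zero.mp h2]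
      linarith
    have hPdeg : P.natDegree ≤ p - 1 := by
      have h1 : q.derivative.natDegree ≤ p - 1 := hdeg ▸ q.natDegree_derivative_le
      calc P.natDegree ≤ max q.derivative.natDegree (C c).natDegree :=
            natDegree_sub_le _ _
        _ ≤ p - 1 := by rw [natDegree_C]; simpa using h1
    set R : Finset ℝ := P.roots.toFinset with hR
    have hRcard : R.card ≤ p - 1 := by
      calc R.card ≤ Multiset.card P.roots := P.roots.toFinset_card_le
        _ ≤ P.natDegree := P.card_roots'
        _ ≤ p - 1 := hPdeg
    have hroots : ∀ j ∈ F, ∃ t : Finset ℝ,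
        (∀ y ∈ t, y ∈ Set.Ioo (j:ℝ) ((j:ℝ)+1)) ∧ (∀ y ∈ t, f y = c) ∧
        (if j = 0 then 1 else 2) ≤ t.card := by
      intro j hj
      have hjS : j ∈ S := (hmem j).1 hj
      have hxIcc := hx1 j hjS
      have hxc : c < f (x j) := hclt j hj
      have hjk : j < k := hjS.1
      have hf1 : f ((j:ℝ)+1) ≤ 0 := by
        have := hder (j+1) (by omega) (by omega)
        push_cast at this
        simpa [hf] using this
      have hxlt : x j < (j:ℝ)+1 := by
        rcases lt_or_eq_of_le hxIcc.2 with h | h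
        · exact h
        · exfalso; rw [h] at hxc; linarith
      have hb := intermediate_value_Ioo' (le_of_lt hxlt) hcont.continuousOn
      obtain ⟨b, hbmem, hbc⟩ := hb ⟨lt_of_le_of_lt hf1 hcpos, hxc⟩
      by_cases hj0 : j = 0
      · refine ⟨{b}, ?_, ?_, ?_⟩
        · intro y hy; rw [Finset.mem_singleton] at hy; subst hy
          exact ⟨lt_of_le_of_lt hxIcc.1 hbmem.1, hbmem.2⟩
        · intro y hy; rw [Finset.mem_singleton] at hy; subst hy; exact hbc
        · simp [hj0]
      · have hj1 : 1 ≤ j := Nat.one_le_iff_ne_zero.2 hj0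
        have hfj : f (j:ℝ) ≤ 0 := hder j hj1 (by omega)
        have hjlt : (j:ℝ) < x j := by
          rcases lt_or_eq_of_le hxIcc.1 with h | h
          · exact h
          · exfalso; rw [← h] at hxc; linarith
        have ha := intermediate_value_Ioo (le_of_lt hjlt) hcont.continuousOn
        obtain ⟨a, hamem, hac⟩ := ha ⟨lt_of_le_of_lt hfj hcpos, hxc⟩
        have hab : a < b := lt_trans hamem.2 hbmem.1
        refine ⟨{a, b}, ?_, ?_, ?_⟩
        · intro y hy
          rw [Finset.mem_insert, Finset.mem_singleton] at hy
          rcases hy with rfl | rfl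
          · exact ⟨hamem.1, lt_trans hamem.2 hxlt⟩
          · exact ⟨lt_of_le_of_lt hxIcc.1 hbmem.1, hbmem.2⟩
        · intro y hy
          rw [Finset.mem_insert, Finset.mem_singleton] at hy
          rcases hy with rfl | rfl
          · exact hac
          · exact hbc
        · rw [Finset.card_insert_of_notMem (by simp [ne_of_lt hab]),
            Finset.card_singleton]
          simp [hj0]
    choose! t ht1 ht2 ht3 using hroots
    have hdisj : ∀ j1 ∈ F, ∀ j2 ∈ F, j1 ≠ j2 → Disjoint (t j1) (t j2) := by
      intro j1 hj1 j2 hj2 hne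
      rw [Finset.disjoint_left]
      intro y hy1 hy2
      have h1 := ht1 j1 hj1 y hy1
      have h2 := ht1 j2 hj2 y hy2
      rcases lt_or_gt_of_ne hne with h | h
      · have : (j1:ℝ) + 1 ≤ j2 := by exact_mod_cast Nat.succ_le_of_lt h
        linarith [h1.2, h2.1]
      · have : (j2:ℝ) + 1 ≤ j1 := by exact_mod_cast Nat.succ_le_of_lt h
        linarith [h2.2, h1.1]
    set T : Finset ℝ := F.biUnion t with hT
    have hTR : T ⊆ R := by
      intro y hy
      rw [hT, Finset.mem_biUnion] at hy
      obtain ⟨j, hj, hyj⟩ := hy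
      have hyc := ht2 j hj y hyj
      rw [hR, Multiset.mem_toFinset, mem_roots hPne]
      rw [IsRoot, hP]
      simp only [eval_sub, eval_C]
      rw [hf] at hyc
      linarith
    have hTcard : T.card = ∑ j ∈ F, (t j).card := Finset.card_biUnion hdisj
    have hsum : 2 * F.card - 1 ≤ ∑ j ∈ F, (t j).card := by
      by_cases h0 : 0 ∈ F
      · have hsplit : ∑ j ∈ F, (t j).card
            = (t 0).card + ∑ j ∈ F.erase 0, (t j).card :=
          (Finset.add_sum_erase F _ h0).symm
        have h1 : 1 ≤ (t 0).card := by simpa using ht3 0 h0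
        have h2 : 2 * (F.erase 0).card ≤ ∑ j ∈ F.erase 0, (t j).card := by
          calc 2 * (F.erase 0).card = ∑ _j ∈ F.erase 0, 2 := by
                rw [mul_comm]
                rw [Finset.sum_const, smul_eq_mul]
            _ ≤ ∑ j ∈ F.erase 0, (t j).card := by
                apply Finset.sum_le_sum
                intro j hj
                have hjne : j ≠ 0 := Finset.ne_of_mem_erase hj
                simpa [hjne] using ht3 j (Finset.mem_of_mem_erase hj)
        have h3 : (F.erase 0).card = F.card - 1 := Finset.card_erase_of_mem h0
        have h4 : 1 ≤ F.card := Finset.card_pos.mpr hFne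
        omega
      · have h2 : 2 * F.card ≤ ∑ j ∈ F, (t j).card := by
          calc 2 * F.card = ∑ _j ∈ F, 2 := by rw [Finset.sum_const, smul_eq_mul, mul_comm]
            _ ≤ ∑ j ∈ F, (t j).card := by
                apply Finset.sum_le_sum
                intro j hj
                have hjne : j ≠ 0 := fun h => h0 (h ▸ hj)
                simpa [hjne] using ht3 j hj
        omega
    have hfinal : 2 * F.card - 1 ≤ p - 1 := by
      calc 2 * F.card - 1 ≤ ∑ j ∈ F, (t j).card := hsum
        _ = T.card := hTcard.symm
        _ ≤ R.card := Finset.card_le_card hTR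
        _ ≤ p - 1 := hRcard
    have h4 : 1 ≤ F.card := Finset.card_pos.mpr hFne
    rw [hncard]
    omega
end

section
/- Fix an order p and step number k, with r ∈ ℝ. The linear system over ℝ: find β_j ≥ 0 and δ_j ≥ 0 for 1 ≤ j ≤ k such that ∑_{j=1}^{k}((δ_j + r·β_j)·j^m − β_j·m·j^{m−1}) = 0^m for all 0 ≤ m ≤ p (with 0^0 = 1), is infeasible if and only if there exists a real polynomial q of degree at most p with q(j) ≥ 0 for 1 ≤ j ≤ k, −q'(j) + r·q(j) ≥ 0 for 1 ≤ j ≤ k, and q(0) < 0. -/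
/-!
Testing on the monomials `X ^ m`, `m ≤ p`, the order conditions say that evaluation at `0`, as a
functional on polynomials of degree `≤ p`, is a nonnegative combination of the functionals
`q ↦ q(j)` and `q ↦ r q(j) - q'(j)` for `1 ≤ j ≤ k`. By Farkas' lemma this fails exactly when
some `q` of degree `≤ p` is nonnegative under all of these functionals and negative at `0`.
-/

namespace Module.Dual

variable {K W ι : Type*} [Field K] [LinearOrder K] [IsStrictOrderedRing K]
  [AddCommGroup W] [Module K W]

lemma sub_smul_apply_eq_apply_sub_smul (φ ψ : Dual K W) (w z : W) (α : K) :
    (φ - (φ w / α) • ψ) z = φ (z - (ψ z / α) • w) := by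
  simp only [LinearMap.sub_apply, LinearMap.smul_apply, map_sub, map_smul, smul_eq_mul]
  ring

theorem farkas_finset [DecidableEq ι] (s : Finset ι) (a : ι → Dual K W) (b : Dual K W) :
    (∃ c : ι → K, (∀ i ∈ s, 0 ≤ c i) ∧ ∑ i ∈ s, c i • a i = b) ∨
      ∃ w, (∀ i ∈ s, 0 ≤ a i w) ∧ b w < 0 := by
  induction s using Finset.induction_on generalizing a b with
  | empty =>
    by_cases hb : b = 0
    · exact .inl ⟨0, by simp, by simp [hb]⟩
    · obtain ⟨x, hx⟩ := DFunLike.ne_iff.1 hb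
      refine .inr ⟨-(b x) • x, by simp, ?_⟩
      simpa using mul_self_pos.2 hx
  | @insert j s hj ih =>
    have extend (c : ι → K) (t : K) (hc : ∀ i ∈ s, 0 ≤ c i) (ht : 0 ≤ t)
        (hsum : t • a j + ∑ i ∈ s, c i • a i = b) :
        ∃ c' : ι → K, (∀ i ∈ insert j s, 0 ≤ c' i) ∧ ∑ i ∈ insert j s, c' i • a i = b := by
      have hupd : ∀ i ∈ s, Function.update c j t i = c i := fun i hi =>
        Function.update_of_ne (ne_of_mem_of_not_mem hi hj) _ _
      refine ⟨Function.update c j t, (Finset.forall_mem_insert ..).2 ⟨by simpa, ?_⟩, ?_⟩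
      · exact fun i hi => hupd i hi ▸ hc i hi
      · rw [Finset.sum_insert hj, Function.update_self, ← hsum]
        exact congrArg _ (Finset.sum_congr rfl fun i hi => by rw [hupd i hi])
    rcases ih a b with ⟨c, hc, hsum⟩ | ⟨w, hw, hbw⟩
    · exact .inl (extend c 0 hc le_rfl (by simpa using hsum))
    by_cases haj : 0 ≤ a j w
    · exact .inr ⟨w, (Finset.forall_mem_insert ..).2 ⟨haj, hw⟩, hbw⟩
    push Not at haj
    set α := a j w
    -- project every functional along `a j` onto the functionals vanishing at `w`
    rcases ih (fun i => a i - (a i w / α) • a j) (b - (b w / α) • a j) with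
      ⟨c, hc, hsum⟩ | ⟨z, hz, hbz⟩
    · have hcw : 0 ≤ ∑ i ∈ s, c i * a i w :=
        Finset.sum_nonneg fun i hi => mul_nonneg (hc i hi) (hw i hi)
      refine .inl (extend c ((b w - ∑ i ∈ s, c i * a i w) / α) hc
        (div_nonneg_of_nonpos (by linarith) haj.le) ?_)
      have hproj : ∑ i ∈ s, c i • (a i - (a i w / α) • a j) =
          ∑ i ∈ s, c i • a i - ((∑ i ∈ s, c i * a i w) / α) • a j := by
        simp [smul_sub, Finset.sum_sub_distrib, smul_smul, ← Finset.sum_smul, Finset.sum_div,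
          mul_div_assoc]
      rw [hproj] at hsum
      linear_combination (norm := module) hsum
    · refine .inr ⟨z - (a j z / α) • w, (Finset.forall_mem_insert ..).2 ⟨?_, fun i hi => ?_⟩, ?_⟩
      · simp [α, haj.ne]
      · rw [← sub_smul_apply_eq_apply_sub_smul]; exact hz i hi
      · rw [← sub_smul_apply_eq_apply_sub_smul]; exact hbz
theorem not_exists_nonneg_sum_eq_iff [Fintype ι] (a : ι → Dual K W) (b : Dual K W) :
    (¬ ∃ c : ι → K, (∀ i, 0 ≤ c i) ∧ ∑ i, c i • a i = b) ↔
      ∃ w, (∀ i, 0 ≤ a i w) ∧ b w < 0 := by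
  classical
  refine ⟨fun h => ?_, fun ⟨w, hw, hbw⟩ ⟨c, hc, hsum⟩ => hbw.not_ge ?_⟩
  · rcases farkas_finset Finset.univ a b with ⟨c, hc, hsum⟩ | ⟨w, hw, hbw⟩
    · exact absurd ⟨c, fun i => hc i (Finset.mem_univ i), hsum⟩ h
    · exact ⟨w, fun i => hw i (Finset.mem_univ i), hbw⟩
  · rw [← hsum, LinearMap.sum_apply]
    exact Finset.sum_nonneg fun i _ => mul_nonneg (hc i) (hw i)

end Module.Dual

open Polynomial

namespace Polynomial

variable {R M : Type*} [CommSemiring R] [AddCommMonoid M] [Module R M]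

lemma X_pow_mem_degreeLE {m n : ℕ} (h : m ≤ n) : (X ^ m : R[X]) ∈ degreeLE R n :=
  mem_degreeLE.2 <| (degree_X_pow_le m).trans (by exact_mod_cast h)

theorem domRestrict_degreeLE_eq_iff (f g : R[X] →ₗ[R] M) (n : ℕ) :
    f.domRestrict (degreeLE R n) = g.domRestrict (degreeLE R n) ↔
      ∀ m ≤ n, f (X ^ m) = g (X ^ m) := by
  classical
  refine ⟨fun h m hm => congrArg (· ⟨X ^ m, X_pow_mem_degreeLE hm⟩) h, fun h => ?_⟩
  ext ⟨q, hq⟩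
  rw [degreeLE_eq_span_X_pow] at hq
  refine LinearMap.eqOn_span' (f := f) (g := g) (fun x hx => ?_) hq
  obtain ⟨m, hm, rfl⟩ := Finset.mem_image.1 hx
  exact h m (Nat.lt_succ_iff.1 (Finset.mem_range.1 hm))

end Polynomial

lemma forall_fin_add_one_iff {k : ℕ} {P : ℕ → Prop} :
    (∀ j : Fin k, P (j + 1)) ↔ ∀ j, 1 ≤ j → j ≤ k → P j := by
  refine ⟨fun h j h1 hk => ?_, fun h j => h _ (by omega) j.isLt⟩
  obtain ⟨i, rfl⟩ : ∃ i, j = i + 1 := ⟨j - 1, by omega⟩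
  exact h ⟨i, by omega⟩

/-- `Sum.inl j` carries the coefficient `β_(j+1)` and `Sum.inr j` carries `δ_(j+1)`. -/
noncomputable def orderConditionFunctional (k : ℕ) (r : ℝ) : Fin k ⊕ Fin k → (ℝ[X] →ₗ[ℝ] ℝ) :=
  Sum.elim (fun j => r • leval ((j : ℝ) + 1) - leval ((j : ℝ) + 1) ∘ₗ derivative)
    (fun j => leval ((j : ℝ) + 1))

lemma exists_order_conditions_iff (k p : ℕ) (r : ℝ) :
    (∃ β δ : Fin k → ℝ, (∀ j, 0 ≤ β j) ∧ (∀ j, 0 ≤ δ j) ∧ ∀ m : ℕ, m ≤ p →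
        ∑ j : Fin k, ((δ j + r * β j) * ((j : ℝ) + 1) ^ m
          - β j * (m : ℝ) * ((j : ℝ) + 1) ^ (m - 1)) = (0 : ℝ) ^ m) ↔
    ∃ c : Fin k ⊕ Fin k → ℝ, (∀ i, 0 ≤ c i) ∧
      ∑ i, c i • (orderConditionFunctional k r i).domRestrict (degreeLE ℝ p) =
        (leval 0).domRestrict (degreeLE ℝ p) := by
  rw [Sum.exists_sum]
  refine exists_congr fun β => exists_congr fun δ => ?_
  rw [Sum.forall, and_assoc]
  refine and_congr_right fun _ => and_congr_right fun _ => ?_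
  have hrestrict :
      ∑ i, (Sum.rec β δ i : ℝ) • (orderConditionFunctional k r i).domRestrict (degreeLE ℝ p) =
      (∑ i, (Sum.rec β δ i : ℝ) • orderConditionFunctional k r i).domRestrict (degreeLE ℝ p) := by
    ext; simp
  rw [hrestrict, domRestrict_degreeLE_eq_iff]
  refine forall₂_congr fun m _ => ?_
  have hmoment : (∑ i, (Sum.rec β δ i : ℝ) • orderConditionFunctional k r i) (X ^ m) =
      ∑ j : Fin k, ((δ j + r * β j) * ((j : ℝ) + 1) ^ m
        - β j * (m : ℝ) * ((j : ℝ) + 1) ^ (m - 1)) := by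
    rw [LinearMap.sum_apply, Fintype.sum_sum_type, ← Finset.sum_add_distrib]
    simp only [LinearMap.smul_apply, orderConditionFunctional, Sum.elim_inl, Sum.elim_inr,
      LinearMap.sub_apply, LinearMap.comp_apply, leval_apply, derivative_X_pow, eval_mul,
      eval_pow, eval_X, eval_C, smul_eq_mul]
    exact Finset.sum_congr rfl fun j _ => by ring
  rw [hmoment, leval_apply, eval_pow, eval_X]

lemma exists_dual_certificate_iff (k p : ℕ) (r : ℝ) :
    (∃ w : degreeLE ℝ p, (∀ i, 0 ≤ (orderConditionFunctional k r i).domRestrict (degreeLE ℝ p) w) ∧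
        (leval 0).domRestrict (degreeLE ℝ p) w < 0) ↔
    ∃ q : Polynomial ℝ, q.degree ≤ p ∧
        (∀ j : ℕ, 1 ≤ j → j ≤ k → 0 ≤ q.eval (j : ℝ)) ∧
        (∀ j : ℕ, 1 ≤ j → j ≤ k → 0 ≤ -q.derivative.eval (j : ℝ) + r * q.eval (j : ℝ)) ∧
        q.eval 0 < 0 := by
  simp only [Subtype.exists, LinearMap.domRestrict_apply, mem_degreeLE, Sum.forall, exists_prop]
  refine exists_congr fun q => and_congr_right fun _ => ?_
  rw [← forall_fin_add_one_iff (P := fun j : ℕ => 0 ≤ q.eval (j : ℝ)),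
    ← forall_fin_add_one_iff
      (P := fun j : ℕ => 0 ≤ -q.derivative.eval (j : ℝ) + r * q.eval (j : ℝ))]
  simp only [orderConditionFunctional, Sum.elim_inl, Sum.elim_inr, LinearMap.sub_apply,
    LinearMap.smul_apply, LinearMap.comp_apply, leval_apply, smul_eq_mul, Nat.cast_add,
    Nat.cast_one, neg_add_eq_sub]
  rw [and_assoc, and_left_comm]

theorem stmt13_general (k p : ℕ) (r : ℝ) :
    (¬ ∃ β δ : Fin k → ℝ, (∀ j, 0 ≤ β j) ∧ (∀ j, 0 ≤ δ j) ∧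
        ∀ m : ℕ, m ≤ p →
          ∑ j : Fin k, ((δ j + r * β j) * ((j : ℝ) + 1) ^ m
              - β j * (m : ℝ) * ((j : ℝ) + 1) ^ (m - 1)) = (0 : ℝ) ^ m) ↔
    (∃ q : Polynomial ℝ, q.degree ≤ p ∧
        (∀ j : ℕ, 1 ≤ j → j ≤ k → 0 ≤ q.eval (j : ℝ)) ∧
        (∀ j : ℕ, 1 ≤ j → j ≤ k → 0 ≤ -q.derivative.eval (j : ℝ) + r * q.eval (j : ℝ)) ∧
        q.eval 0 < 0) := by
  rw [exists_order_conditions_iff, Module.Dual.not_exists_nonneg_sum_eq_iff,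
    exists_dual_certificate_iff]

theorem stmt13 (k p : ℕ) (hk : 1 ≤ k) (hp : 1 ≤ p) (r : ℝ) :
    (¬ ∃ β δ : Fin k → ℝ, (∀ j, 0 ≤ β j) ∧ (∀ j, 0 ≤ δ j) ∧
        ∀ m : ℕ, m ≤ p →
          ∑ j : Fin k, ((δ j + r * β j) * ((j : ℝ) + 1) ^ m
              - β j * (m : ℝ) * ((j : ℝ) + 1) ^ (m - 1)) = (0 : ℝ) ^ m) ↔
    (∃ q : Polynomial ℝ, q.degree ≤ p ∧
        (∀ j : ℕ, 1 ≤ j → j ≤ k → 0 ≤ q.eval (j : ℝ)) ∧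
        (∀ j : ℕ, 1 ≤ j → j ≤ k → 0 ≤ -q.derivative.eval (j : ℝ) + r * q.eval (j : ℝ)) ∧
        q.eval 0 < 0) :=
  stmt13_general k p r
end

section
/- For even positive integers p ≥ 2k+2 (k ≥ 1), the polynomial q(x) = x·((x−k)²+1)^{(p−2k)/2}·(k−x)·∏_{j=1}^{k−1}(x−j)² satisfies: q has degree p, q(0) = 0, q is nonnegative on [0,k], q(j) = 0 and q'(j) = 0 for integers 1 ≤ j ≤ k−1, and q(k) = 0 with q'(k) ≤ 0. -/
open Polynomial

theorem stmt15 (k p : ℕ) (hk : 1 ≤ k) (hp : 2 * k + 2 ≤ p) (heven : Even p)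
    (q : Polynomial ℝ)
    (hq : q = X * ((X - C (k : ℝ)) ^ 2 + 1) ^ ((p - 2 * k) / 2) * (C (k : ℝ) - X) *
        ∏ j ∈ Finset.Icc 1 (k - 1), (X - C (j : ℝ)) ^ 2) :
    q.natDegree = p ∧ q.eval 0 = 0 ∧
    (∀ x ∈ Set.Icc (0 : ℝ) (k : ℝ), 0 ≤ q.eval x) ∧
    (∀ j : ℕ, 1 ≤ j → j ≤ k - 1 → q.eval (j : ℝ) = 0 ∧ q.derivative.eval (j : ℝ) = 0) ∧
    q.eval (k : ℝ) = 0 ∧ q.derivative.eval (k : ℝ) ≤ 0 := by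
  set m := (p - 2 * k) / 2 with hm
  set B : ℝ[X] := (X - C (k : ℝ)) ^ 2 + 1 with hB
  set P : ℝ[X] := ∏ j ∈ Finset.Icc 1 (k - 1), (X - C (j : ℝ)) ^ 2 with hP
  have hBmonic : B.Monic := by
    apply Polynomial.Monic.add_of_left ((monic_X_sub_C _).pow 2)
    rw [degree_pow, degree_X_sub_C]
    exact lt_of_le_of_lt degree_one_le (by decide)
  have hBdeg : B.natDegree = 2 := by
    rw [hB, ← C_1, natDegree_add_C, natDegree_pow, natDegree_X_sub_C]
  have hPmonic : P.Monic :=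
    monic_prod_of_monic _ _ (fun j _ => (monic_X_sub_C _).pow 2)
  have hPdeg : P.natDegree = 2 * (k - 1) := by
    rw [hP, natDegree_prod_of_monic _ _ (fun j _ => (monic_X_sub_C _).pow 2)]
    have h2 : ∀ j ∈ Finset.Icc 1 (k - 1), ((X - C (j : ℝ)) ^ 2).natDegree = 2 :=
      fun j _ => by rw [natDegree_pow, natDegree_X_sub_C]
    rw [Finset.sum_congr rfl h2, Finset.sum_const, Nat.card_Icc, smul_eq_mul]
    omega
  have hdegq : q.natDegree = p := by
    have hqM : q = -(X * B ^ m * (X - C (k : ℝ)) * P) := by rw [hq]; ring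
    rw [hqM, natDegree_neg,
      Monic.natDegree_mul ((monic_X.mul (hBmonic.pow m)).mul (monic_X_sub_C _)) hPmonic,
      Monic.natDegree_mul (monic_X.mul (hBmonic.pow m)) (monic_X_sub_C _),
      Monic.natDegree_mul monic_X (hBmonic.pow m),
      natDegree_X, natDegree_X_sub_C, natDegree_pow, hBdeg, hPdeg]
    obtain ⟨t, ht⟩ := heven
    omega
  refine ⟨hdegq, by rw [hq]; simp, ?_, ?_, by rw [hq]; simp, ?_⟩
  · intro x hx
    rw [hq]
    simp only [hB, hP, eval_mul, eval_pow, eval_add, eval_sub, eval_X, eval_C, eval_one,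
      eval_prod]
    apply mul_nonneg
    apply mul_nonneg
    apply mul_nonneg hx.1 (pow_nonneg (by positivity) _)
    · linarith [hx.2]
    · exact Finset.prod_nonneg fun j _ => by positivity
  · intro j hj1 hj2
    have hmem : j ∈ Finset.Icc 1 (k - 1) := Finset.mem_Icc.mpr ⟨hj1, hj2⟩
    have hdvd : (X - C (j : ℝ)) ^ 2 ∣ q := by
      rw [hq]
      exact dvd_mul_of_dvd_right (Finset.dvd_prod_of_mem _ hmem) _
    obtain ⟨r, hr⟩ := hdvd
    constructor
    · rw [hr]; simp
    · rw [hr, derivative_mul, derivative_pow]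
      simp
  · have hq2 : q = (C (k : ℝ) - X) * (X * B ^ m * P) := by rw [hq]; ring
    have hs : 0 ≤ (X * B ^ m * P).eval (k : ℝ) := by
      simp only [hB, hP, eval_mul, eval_pow, eval_add, eval_sub, eval_X, eval_C, eval_one,
        eval_prod]
      apply mul_nonneg
      apply mul_nonneg (Nat.cast_nonneg k) (pow_nonneg (by positivity) _)
      exact Finset.prod_nonneg fun j _ => by positivity
    have hd : q.derivative.eval (k : ℝ) = -((X * B ^ m * P).eval (k : ℝ)) := by
      rw [hq2, derivative_mul]
      simp
    rw [hd]
    linarith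
end

section
/- Suppose q is a real polynomial satisfying q(j) ≥ 0 for 1 ≤ j ≤ k, −q'(j) + r·q(j) ≥ 0 for 1 ≤ j ≤ k, and q(0) < 0, for some r > 0. Then the polynomial Q(x) = q(x) − q(0)/2 satisfies Q(j) ≥ 0 and Q(0) < 0 for the same range of j, and there exists r' > r such that −Q'(j) + r'·Q(j) ≥ 0 for all integers 1 ≤ j ≤ k. -/
open Polynomial

theorem stmt17 (k : ℕ) (hk : 1 ≤ k) (q : Polynomial ℝ) (r : ℝ) (hr : 0 < r)
    (h1 : ∀ j : ℕ, 1 ≤ j → j ≤ k → 0 ≤ q.eval (j : ℝ))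
    (h2 : ∀ j : ℕ, 1 ≤ j → j ≤ k → 0 ≤ -q.derivative.eval (j : ℝ) + r * q.eval (j : ℝ))
    (h3 : q.eval 0 < 0)
    (Q : Polynomial ℝ) (hQ : Q = q - C (q.eval 0 / 2)) :
    (∀ j : ℕ, 1 ≤ j → j ≤ k → 0 ≤ Q.eval (j : ℝ)) ∧ Q.eval 0 < 0 ∧
    ∃ r' : ℝ, r < r' ∧
      ∀ j : ℕ, 1 ≤ j → j ≤ k → 0 ≤ -Q.derivative.eval (j : ℝ) + r' * Q.eval (j : ℝ) := by
  subst hQ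
  have hQeval : ∀ x : ℝ, (q - C (q.eval 0 / 2)).eval x = q.eval x - q.eval 0 / 2 := by
    intro x; simp
  have hQ' : (q - C (q.eval 0 / 2)).derivative = q.derivative := by
    simp
  refine ⟨?_, ?_, r + 1, by linarith, ?_⟩
  · intro j hj1 hjk
    rw [hQeval]
    have := h1 j hj1 hjk
    linarith
  · rw [hQeval]; linarith
  · intro j hj1 hjk
    rw [hQ', hQeval]
    have hq := h1 j hj1 hjk
    have h2j := h2 j hj1 hjk
    nlinarith
end
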